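/- Under the linear optimal-transport path, the score of the marginal density equals minus the rescaled combination of state and velocity: for every t ∈ (0,1) and every x ∈ ℝ, the marginal density p_t is differentiable at x, p_t(x) > 0, and p_t'(x)/p_t(x) = −(x − t·u_t(x))/(1−t). -/

import Mathlib

open MeasureTheory Real

/-- Gaussian density `φ(x; m, s²) = (2πs²)^(−1/2) · exp(−(x−m)²/(2s²))`. -/
noncomputable def gauss (m s2 x : ℝ) : ℝ :=
  (Real.sqrt (2 * Real.pi * s2))⁻¹ * Real.exp (-(x - m) ^ 2 / (2 * s2))

/-!
Since `|∂ₓ φ(x; m, s)|` is bounded uniformly in `m` and `x`, `p_t` may be differentiated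
under the integral sign for any finite mixing measure, and `∂ₓ φ(x; m, s) = -(x - m)/s · φ(x; m, s)`
gives Tweedie's formula `p_t' = (t·∫ y φ dμ - x·p_t)/(1-t)² = (t·m_t - x)·p_t/(1-t)²`.
The stated identity is this one rewritten through `u_t = (m_t - x)/(1-t)`.
-/

section GaussianDensity

variable {s : ℝ}

lemma gauss_pos (hs : 0 < s) (m x : ℝ) : 0 < gauss m s x := by
  unfold gauss
  positivity

lemma gauss_le (hs : 0 ≤ s) (m x : ℝ) : gauss m s x ≤ (√(2 * π * s))⁻¹ := by
  unfold gauss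
  refine mul_le_of_le_one_right (by positivity) (exp_le_one_iff.2 ?_)
  exact div_nonpos_of_nonpos_of_nonneg (by nlinarith [sq_nonneg (x - m)]) (by positivity)

lemma continuous_gauss_mean (s x : ℝ) : Continuous fun m => gauss m s x := by
  unfold gauss
  fun_prop

lemma hasDerivAt_gauss (hs : 0 < s) (m x : ℝ) :
    HasDerivAt (gauss m s) (-(x - m) / s * gauss m s x) x := by
  have hexp : HasDerivAt (fun x => -(x - m) ^ 2 / (2 * s)) (-(2 * (x - m)) / (2 * s)) x := by
    simpa using (((hasDerivAt_id x).sub_const m).pow 2).neg.div_const (2 * s)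
  refine (hexp.exp.const_mul (√(2 * π * s))⁻¹).congr_deriv ?_
  unfold gauss
  field_simp

/-- AM–GM gives `|z| ≤ z²/(2s) + s/2`, and `z²/(2s) ≤ exp (z²/(2s))`. -/
lemma abs_mul_exp_neg_sq_div_le (hs : 0 < s) (z : ℝ) :
    |z| * exp (-z ^ 2 / (2 * s)) ≤ 1 + s / 2 := by
  set a := z ^ 2 / (2 * s)
  have h_amgm : |z| ≤ a + s / 2 := by
    rw [show a + s / 2 = (z ^ 2 + s ^ 2) / (2 * s) by simp only [a]; field_simp,
      le_div_iff₀ (by positivity)]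
    nlinarith [sq_nonneg (|z| - s), sq_abs z]
  have h_exp : a ≤ exp a := by linarith [add_one_le_exp a]
  have h_inv : exp a * exp (-a) = 1 := by rw [← exp_add, add_neg_cancel, exp_zero]
  rw [neg_div]
  nlinarith [exp_pos (-a), exp_le_one_iff.2 (neg_nonpos.2 (by positivity : 0 ≤ a))]

lemma abs_deriv_gauss_le (hs : 0 < s) (m x : ℝ) :
    |-(x - m) / s * gauss m s x| ≤ (√(2 * π * s))⁻¹ * (1 + s / 2) / s := by
  have h := abs_mul_exp_neg_sq_div_le hs (x - m)
  rw [abs_mul, abs_div, abs_neg, abs_of_pos hs, abs_of_pos (gauss_pos hs m x)]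
  unfold gauss
  calc |x - m| / s * ((√(2 * π * s))⁻¹ * exp (-(x - m) ^ 2 / (2 * s)))
      = (√(2 * π * s))⁻¹ * (|x - m| * exp (-(x - m) ^ 2 / (2 * s))) / s := by ring
    _ ≤ (√(2 * π * s))⁻¹ * (1 + s / 2) / s := by gcongr

end GaussianDensity

section GaussianMixture

variable {α : Type*} [MeasurableSpace α] {μ : Measure α} [IsFiniteMeasure μ]
  {f : α → ℝ} {s : ℝ}

lemma integrable_gauss_comp (hf : Measurable f) (hs : 0 < s) (x : ℝ) :
    Integrable (fun y => gauss (f y) s x) μ := by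
  refine Integrable.mono' (integrable_const (√(2 * π * s))⁻¹)
    ((continuous_gauss_mean s x).measurable.comp hf).aestronglyMeasurable (ae_of_all _ fun y => ?_)
  rw [norm_of_nonneg (gauss_pos hs _ x).le]
  exact gauss_le hs.le _ x

lemma integrable_deriv_gauss_comp (hf : Measurable f) (hs : 0 < s) (x : ℝ) :
    Integrable (fun y => -(x - f y) / s * gauss (f y) s x) μ := by
  refine Integrable.mono' (integrable_const ((√(2 * π * s))⁻¹ * (1 + s / 2) / s)) ?_
    (ae_of_all _ fun y => abs_deriv_gauss_le hs (f y) x)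
  exact ((hf.const_sub x).neg.div_const s |>.mul
    ((continuous_gauss_mean s x).measurable.comp hf)).aestronglyMeasurable

lemma integrable_mul_gauss_comp (hf : Measurable f) (hs : 0 < s) (x : ℝ) :
    Integrable (fun y => f y * gauss (f y) s x) μ := by
  refine (((integrable_deriv_gauss_comp hf hs x).const_mul s).add
    ((integrable_gauss_comp hf hs x).const_mul x)).congr (ae_of_all _ fun y => ?_)
  simp only [Pi.add_apply]
  field_simp
  ring

lemma integral_gauss_comp_pos [NeZero μ] (hf : Measurable f) (hs : 0 < s) (x : ℝ) :
    0 < ∫ y, gauss (f y) s x ∂μ := by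
  rw [integral_pos_iff_support_of_nonneg (fun y => (gauss_pos hs _ x).le)
    (integrable_gauss_comp hf hs x)]
  have : Function.support (fun y => gauss (f y) s x) = Set.univ :=
    Function.support_eq_univ fun y => (gauss_pos hs _ x).ne'
  simpa [this] using NeZero.ne μ

lemma hasDerivAt_integral_gauss_comp (hf : Measurable f) (hs : 0 < s) (x₀ : ℝ) :
    HasDerivAt (fun x => ∫ y, gauss (f y) s x ∂μ)
      ((∫ y, f y * gauss (f y) s x₀ ∂μ - x₀ * ∫ y, gauss (f y) s x₀ ∂μ) / s) x₀ := by
  have h := hasDerivAt_integral_of_dominated_loc_of_deriv_le (μ := μ)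
    (F := fun x y => gauss (f y) s x) (F' := fun x y => -(x - f y) / s * gauss (f y) s x)
    (bound := fun _ => (√(2 * π * s))⁻¹ * (1 + s / 2) / s) Filter.univ_mem
    (.of_forall fun x => (integrable_gauss_comp hf hs x).aestronglyMeasurable)
    (integrable_gauss_comp hf hs x₀) (integrable_deriv_gauss_comp hf hs x₀).aestronglyMeasurable
    (ae_of_all _ fun y x _ => abs_deriv_gauss_le hs (f y) x) (integrable_const _)
    (ae_of_all _ fun y x _ => hasDerivAt_gauss hs (f y) x)
  refine h.2.congr_deriv ?_
  have h_integrand : (fun y => -(x₀ - f y) / s * gauss (f y) s x₀) =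
      fun y => (f y * gauss (f y) s x₀ - x₀ * gauss (f y) s x₀) / s := by
    ext y
    ring
  rw [h_integrand, integral_div, integral_sub (integrable_mul_gauss_comp hf hs x₀)
    ((integrable_gauss_comp hf hs x₀).const_mul x₀), integral_const_mul]

end GaussianMixture

/-- **Score–velocity relation under the linear OT path.**
For every `t ∈ (0,1)` and every `x ∈ ℝ`, the marginal density `p_t` is differentiable
at `x`, `p_t x > 0`, and `p_t'(x)/p_t(x) = −(x − t·u_t(x))/(1−t)`. -/
theorem score_velocity_linear_OT
    (t : ℝ) (ht : t ∈ Set.Ioo (0 : ℝ) 1)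
    (μ : Measure ℝ) [IsProbabilityMeasure μ]
    (p m u : ℝ → ℝ)
    (hp : ∀ x, p x = ∫ y, gauss (t * y) ((1 - t) ^ 2) x ∂μ)
    (hm : ∀ x, m x = (p x)⁻¹ * ∫ y, y * gauss (t * y) ((1 - t) ^ 2) x ∂μ)
    (hu : ∀ x, u x = (m x - x) / (1 - t)) :
    ∀ x : ℝ, DifferentiableAt ℝ p x ∧ 0 < p x ∧
      deriv p x / p x = -(x - t * u x) / (1 - t) := by
  intro x
  have h1t : 1 - t ≠ 0 := by linarith [ht.2]
  have hs : 0 < (1 - t) ^ 2 := by positivity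
  have hf : Measurable fun y : ℝ => t * y := measurable_const_mul t
  have hderiv := hasDerivAt_integral_gauss_comp (μ := μ) hf hs x
  rw [← funext hp] at hderiv
  have hpos : 0 < p x := hp x ▸ integral_gauss_comp_pos hf hs x
  have hmean : ∫ y, t * y * gauss (t * y) ((1 - t) ^ 2) x ∂μ = t * (m x * p x) := by
    simp_rw [mul_assoc, integral_const_mul]
    rw [hm x]
    field_simp
  refine ⟨hderiv.differentiableAt, hpos, ?_⟩
  rw [hderiv.deriv, hmean, ← hp x, hu x]
  field_simp
  ring
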